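/- arXiv:1602.04952 — 8 statements merged into one kernel-verified Lean document; each statement's English description precedes it below -/
import Mathlib

section
/- Let k ≥ 2 be an integer. For every continuous function N : (0,1] × [0,∞) → [0,1] satisfying the column requirement, the double integral ∫₀^∞ ∫₀¹ (1/x)·N(x,t)^k dx dt, taken in the extended nonnegative reals [0,∞], is at least (3k−1)/(k(k+1)). -/
/-!
Weak Lagrangian duality, one time slice at a time. If `m ≥ 0` and `φ x + m (y - 1) ≤ y ^ k / x`
for all `x ∈ (0,1]`, `y ∈ [0,1]`, then the column requirement gives
`∫₀¹ N(x,t)^k / x dx ≥ ∫₀¹ φ - m t`. Tangent lines of `y ↦ y ^ k` provide such certificates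
`φ`, depending on a cut-off `a ∈ (0,1]` and a scale `c ≥ 0`. For `t ≤ 1/k` the choice `a = k t`,
`c = 1` gives the bound `(k-1)/k - log (k t)`; for `1/k < t ≤ 1` the choice `a = 1`,
`c = k (1-t)/(k-1)` gives `(k-1)/k · c ^ k`. Integrating over `t ∈ (0,1]` yields
`(2k-1)/k² + (k-1)²/(k²(k+1)) = (3k-1)/(k(k+1))`.
-/

open MeasureTheory Set Real

theorem ofReal_integral_le_lintegral_ofReal {α : Type*} [MeasurableSpace α] {μ : Measure α}
    (f : α → ℝ) : ENNReal.ofReal (∫ x, f x ∂μ) ≤ ∫⁻ x, ENNReal.ofReal (f x) ∂μ := by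
  by_cases hf : Integrable f μ
  · refine le_trans (ENNReal.ofReal_le_ofReal ?_) ENNReal.ofReal_toReal_le
    rw [integral_eq_lintegral_pos_part_sub_lintegral_neg_part hf]
    exact sub_le_self _ ENNReal.toReal_nonneg
  · simp [integral_undef hf]

theorem ofReal_setIntegral_le_setLIntegral {α : Type*} [MeasurableSpace α] {μ : Measure α}
    {s : Set α} (hs : MeasurableSet s) {f : α → ℝ} {F : α → ENNReal}
    (hfF : ∀ x ∈ s, ENNReal.ofReal (f x) ≤ F x) :
    ENNReal.ofReal (∫ x in s, f x ∂μ) ≤ ∫⁻ x in s, F x ∂μ :=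
  (ofReal_integral_le_lintegral_ofReal f).trans (setLIntegral_mono' hs hfF)

theorem ofReal_integral_sub_mul_le_lintegral {α : Type*} [MeasurableSpace α] {μ : Measure α}
    [IsFiniteMeasure μ] {f φ g : α → ℝ} {m t : ℝ} (hf : Integrable f μ) (hφ : Integrable φ μ)
    (hm : 0 ≤ m) (hft : ∫ x, (1 - f x) ∂μ ≤ t) (hg : ∀ᵐ x ∂μ, φ x + m * (f x - 1) ≤ g x) :
    ENNReal.ofReal (∫ x, φ x ∂μ - m * t) ≤ ∫⁻ x, ENNReal.ofReal (g x) ∂μ := by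
  have hf1 : Integrable (fun x => f x - 1) μ := hf.sub (integrable_const 1)
  calc ENNReal.ofReal (∫ x, φ x ∂μ - m * t)
      ≤ ENNReal.ofReal (∫ x, (φ x + m * (f x - 1)) ∂μ) := by
        refine ENNReal.ofReal_le_ofReal ?_
        have h1f : ∫ x, (f x - 1) ∂μ = -∫ x, (1 - f x) ∂μ := by
          rw [← integral_neg]; simp only [neg_sub]
        rw [integral_add hφ (hf1.const_mul m), integral_const_mul, h1f]
        linarith [mul_le_mul_of_nonneg_left hft hm]
    _ ≤ ∫⁻ x, ENNReal.ofReal (φ x + m * (f x - 1)) ∂μ := ofReal_integral_le_lintegral_ofReal _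
    _ ≤ ∫⁻ x, ENNReal.ofReal (g x) ∂μ :=
        lintegral_mono_ae (hg.mono fun _ hx => ENNReal.ofReal_le_ofReal hx)

theorem integrableOn_Ioc_ite {f g : ℝ → ℝ} {a b c : ℝ} (hab : a ≤ b) (hbc : b ≤ c)
    (hf : IntegrableOn f (Ioc a b)) (hg : IntegrableOn g (Ioc b c)) :
    IntegrableOn (fun x => if x ≤ b then f x else g x) (Ioc a c) := by
  rw [← Ioc_union_Ioc_eq_Ioc hab hbc]
  refine IntegrableOn.union ?_ ?_
  · exact hf.congr_fun (fun x hx => (if_pos hx.2).symm) measurableSet_Ioc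
  · exact hg.congr_fun (fun x hx => (if_neg (not_le.2 hx.1)).symm) measurableSet_Ioc

theorem setIntegral_Ioc_ite {f g : ℝ → ℝ} {a b c : ℝ} (hab : a ≤ b) (hbc : b ≤ c)
    (hf : IntegrableOn f (Ioc a b)) (hg : IntegrableOn g (Ioc b c)) :
    ∫ x in Ioc a c, (if x ≤ b then f x else g x)
      = (∫ x in Ioc a b, f x) + ∫ x in Ioc b c, g x := by
  have hint := integrableOn_Ioc_ite hab hbc hf hg
  rw [← Ioc_union_Ioc_eq_Ioc hab hbc] at hint ⊢
  rw [setIntegral_union (Ioc_disjoint_Ioc_of_le le_rfl) measurableSet_Ioc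
    (hint.mono_set subset_union_left) (hint.mono_set subset_union_right)]
  congr 1
  · exact setIntegral_congr_fun measurableSet_Ioc fun x hx => if_pos hx.2
  · exact setIntegral_congr_fun measurableSet_Ioc fun x hx => if_neg (not_le.2 hx.1)

theorem pow_tangent_le (k : ℕ) {y z : ℝ} (hy : 0 ≤ y) (hz : 0 ≤ z) :
    (1 - k) * z ^ k + k * z ^ (k - 1) * y ≤ y ^ k := by
  rcases hz.eq_or_lt with rfl | hz
  · rcases k with _ | _ | k <;> simp [pow_nonneg hy]
  have hber := one_add_mul_sub_le_pow (by linarith [div_nonneg hy hz.le] : -1 ≤ y / z) k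
  rcases Nat.eq_zero_or_pos k with rfl | hk
  · simp
  have hzk : z ^ k = z ^ (k - 1) * z := by rw [← pow_succ, Nat.sub_add_cancel hk]
  calc (1 - k) * z ^ k + k * z ^ (k - 1) * y = z ^ k * (1 + k * (y / z - 1)) := by
        rw [hzk]; field_simp; ring
    _ ≤ z ^ k * (y / z) ^ k := by gcongr
    _ = y ^ k := by rw [← mul_pow, mul_div_cancel₀ _ hz.ne']

theorem pow_tangent_rpow_le_div {k : ℕ} (hk : 2 ≤ k) {c x y : ℝ} (hc : 0 ≤ c) (hx : 0 < x)
    (hy : 0 ≤ y) : (1 - k) * c ^ k * x ^ ((k : ℝ) - 1)⁻¹ + k * c ^ (k - 1) * y ≤ y ^ k / x := by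
  set X := x ^ ((k : ℝ) - 1)⁻¹
  have hX : 0 ≤ X := by positivity
  have hXk1 : X ^ (k - 1) = x := by
    have h := rpow_inv_natCast_pow hx.le (by omega : k - 1 ≠ 0)
    rwa [Nat.cast_sub (by omega : 1 ≤ k), Nat.cast_one] at h
  have hXk : X ^ k = X ^ (k - 1) * X := by rw [← pow_succ, Nat.sub_add_cancel (by omega)]
  have htan := pow_tangent_le k hy (mul_nonneg hc hX)
  rw [mul_pow, mul_pow, hXk, hXk1] at htan
  rw [le_div_iff₀ hx]
  linarith

/-- For `x ≤ a` this is the minimum over `y ≥ 0` of `y ^ k / x - m (y - 1)`, `m = k c ^ (k-1) / a`,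
attained at `y = c (x / a) ^ (1 / (k - 1))`; for `x > a` it is the value at `y = 1`. -/
noncomputable def dualCertificate (k : ℕ) (a c x : ℝ) : ℝ :=
  if x ≤ a then ((1 - k) * c ^ k * (x / a) ^ ((k : ℝ) - 1)⁻¹ + k * c ^ (k - 1)) / a else 1 / x

section dualCertificate

variable {k : ℕ} {a c : ℝ}

theorem dualCertificate_add_mul_le (hk : 2 ≤ k) (ha : 0 < a) (hc : 0 ≤ c)
    (hac : a < 1 → 1 ≤ c ^ (k - 1)) {x y : ℝ} (hx : x ∈ Ioc 0 1) (hy : y ∈ Icc 0 1) :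
    dualCertificate k a c x + k * c ^ (k - 1) / a * (y - 1) ≤ 1 / x * y ^ k := by
  unfold dualCertificate
  split_ifs with hxa
  · have h := pow_tangent_rpow_le_div hk hc (div_pos hx.1 ha) hy.1
    calc _ = ((1 - k) * c ^ k * (x / a) ^ ((k : ℝ) - 1)⁻¹ + k * c ^ (k - 1) * y) / a := by ring
      _ ≤ y ^ k / (x / a) / a := by gcongr
      _ = 1 / x * y ^ k := by field_simp
  · have hxa : a < x := not_le.1 hxa
    have hc1 : 1 ≤ c ^ (k - 1) := hac (hxa.trans_le hx.2)
    have hslope : 1 / x ≤ c ^ (k - 1) / a :=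
      calc 1 / x ≤ 1 / a := by gcongr
        _ ≤ c ^ (k - 1) / a := by gcongr
    have hber : 1 + k * (y - 1) ≤ y ^ k := one_add_mul_sub_le_pow (by linarith [hy.1]) k
    calc 1 / x + k * c ^ (k - 1) / a * (y - 1) = 1 / x - k * (c ^ (k - 1) / a) * (1 - y) := by
          ring
      _ ≤ 1 / x - k * (1 / x) * (1 - y) := by gcongr; linarith [hy.2]
      _ = 1 / x * (1 + k * (y - 1)) := by ring
      _ ≤ 1 / x * y ^ k := by gcongr; exact (one_div_pos.2 hx.1).le

theorem continuous_dualCertificate_left (hk : 1 ≤ k) :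
    Continuous fun x => ((1 - k) * c ^ k * (x / a) ^ ((k : ℝ) - 1)⁻¹ + k * c ^ (k - 1)) / a := by
  have hr : (0 : ℝ) ≤ ((k : ℝ) - 1)⁻¹ := by
    rwa [inv_nonneg, sub_nonneg, Nat.one_le_cast]
  fun_prop (disch := exact fun _ => Or.inr hr)

theorem integrableOn_one_div_Ioc {a b : ℝ} (ha : 0 < a) :
    IntegrableOn (fun x => 1 / x) (Ioc a b) :=
  (continuousOn_const.div continuousOn_id fun _ hx => (ha.trans_le hx.1).ne').integrableOn_Icc
    |>.mono_set Ioc_subset_Icc_self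

theorem integrableOn_dualCertificate (hk : 1 ≤ k) (ha : 0 < a) (ha1 : a ≤ 1) :
    IntegrableOn (dualCertificate k a c) (Ioc 0 1) :=
  integrableOn_Ioc_ite ha.le ha1 (continuous_dualCertificate_left hk).integrableOn_Ioc
    (integrableOn_one_div_Ioc ha)

theorem integral_dualCertificate (hk : 2 ≤ k) (ha : 0 < a) (ha1 : a ≤ 1) :
    ∫ x in Ioc 0 1, dualCertificate k a c x
      = -((k - 1) ^ 2 / k) * c ^ k + k * c ^ (k - 1) - log a := by
  have hk' : (2 : ℝ) ≤ k := by exact_mod_cast hk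
  have hk0 : (k : ℝ) ≠ 0 := by positivity
  have hk1 : (k : ℝ) - 1 ≠ 0 := by linarith
  have hr : (0 : ℝ) ≤ ((k : ℝ) - 1)⁻¹ := by rw [inv_nonneg]; linarith
  have hr1 : ((k : ℝ) - 1)⁻¹ + 1 = k / (k - 1) := by field_simp; ring
  have hcont : Continuous fun x : ℝ => (x / a) ^ ((k : ℝ) - 1)⁻¹ :=
    (continuous_id.div_const a).rpow_const fun _ => Or.inr hr
  unfold dualCertificate
  rw [setIntegral_Ioc_ite ha.le ha1 (continuous_dualCertificate_left (by omega)).integrableOn_Ioc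
    (integrableOn_one_div_Ioc ha), ← intervalIntegral.integral_of_le ha.le,
    ← intervalIntegral.integral_of_le ha1, integral_one_div_of_pos ha one_pos, one_div a, log_inv,
    intervalIntegral.integral_div, intervalIntegral.integral_add
      ((hcont.intervalIntegrable _ _).const_mul _) intervalIntegrable_const,
    intervalIntegral.integral_const_mul,
    intervalIntegral.integral_comp_div (fun x : ℝ => x ^ ((k : ℝ) - 1)⁻¹) ha.ne',
    integral_rpow (Or.inl (by linarith)), div_self ha.ne', zero_div, one_rpow,
    zero_rpow (by linarith), hr1, intervalIntegral.integral_const, smul_eq_mul, smul_eq_mul]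
  field_simp
  ring

end dualCertificate

noncomputable def columnCost (k : ℕ) (n : ℝ → ℝ) : ENNReal :=
  ∫⁻ x in Ioc 0 1, ENNReal.ofReal (1 / x * n x ^ k)

section columnCost

variable {k : ℕ} {n : ℝ → ℝ} {t : ℝ}

theorem ofReal_le_columnCost (hk : 2 ≤ k) (hn : AEMeasurable n (volume.restrict (Ioc 0 1)))
    (hn01 : ∀ x ∈ Ioc 0 1, n x ∈ Icc 0 1) (hnt : ∫ x in Ioc 0 1, (1 - n x) ≤ t) {a c : ℝ}
    (ha : 0 < a) (ha1 : a ≤ 1) (hc : 0 ≤ c) (hac : a < 1 → 1 ≤ c ^ (k - 1)) :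
    ENNReal.ofReal (-((k - 1) ^ 2 / k) * c ^ k + k * c ^ (k - 1) - log a - k * c ^ (k - 1) / a * t)
      ≤ columnCost k n := by
  have hn_int : IntegrableOn n (Ioc 0 1) :=
    Integrable.of_bound hn.aestronglyMeasurable 1 <| ae_restrict_of_forall_mem measurableSet_Ioc
      fun x hx => by
        rw [Real.norm_eq_abs, abs_le]; exact ⟨by linarith [(hn01 x hx).1], (hn01 x hx).2⟩
  rw [← integral_dualCertificate hk ha ha1]
  exact ofReal_integral_sub_mul_le_lintegral hn_int
    (integrableOn_dualCertificate (by omega) ha ha1) (by positivity) hnt <|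
      ae_restrict_of_forall_mem measurableSet_Ioc fun x hx =>
        dualCertificate_add_mul_le hk ha hc hac hx (hn01 x hx)

theorem ofReal_sub_log_le_columnCost (hk : 2 ≤ k)
    (hn : AEMeasurable n (volume.restrict (Ioc 0 1)))
    (hn01 : ∀ x ∈ Ioc 0 1, n x ∈ Icc 0 1) (hnt : ∫ x in Ioc 0 1, (1 - n x) ≤ t)
    (ht : t ∈ Ioc 0 (1 / (k : ℝ))) :
    ENNReal.ofReal ((k - 1) / k - log (k * t)) ≤ columnCost k n := by
  have hk0 : (0 : ℝ) < k := by positivity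
  have hkt : k * t ≤ 1 := by rw [← le_div_iff₀' hk0]; exact ht.2
  convert ofReal_le_columnCost hk hn hn01 hnt (mul_pos hk0 ht.1) hkt zero_le_one
    (fun _ => (one_pow _).ge) using 2
  have ht0 : t ≠ 0 := ht.1.ne'
  field_simp
  ring

theorem ofReal_mul_pow_le_columnCost (hk : 2 ≤ k)
    (hn : AEMeasurable n (volume.restrict (Ioc 0 1)))
    (hn01 : ∀ x ∈ Ioc 0 1, n x ∈ Icc 0 1) (hnt : ∫ x in Ioc 0 1, (1 - n x) ≤ t) (ht : t ≤ 1) :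
    ENNReal.ofReal ((k - 1) / k * (k * (1 - t) / (k - 1)) ^ k) ≤ columnCost k n := by
  have hk' : (2 : ℝ) ≤ k := by exact_mod_cast hk
  have hk1 : (k : ℝ) - 1 ≠ 0 := by linarith
  set c := k * (1 - t) / (k - 1) with hc
  have hc0 : 0 ≤ c := div_nonneg (mul_nonneg (by linarith) (sub_nonneg.2 ht)) (by linarith)
  have hck : c ^ k = c ^ (k - 1) * c := by rw [← pow_succ, Nat.sub_add_cancel (by omega)]
  convert ofReal_le_columnCost hk hn hn01 hnt one_pos le_rfl
    hc0 (fun h => absurd h (lt_irrefl 1)) using 2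
  rw [log_one, hck, hc]
  field_simp
  ring

end columnCost

theorem integral_sub_log_mul {K : ℝ} (hK : K ≠ 0) :
    ∫ t in (0)..1 / K, ((K - 1) / K - log (K * t)) = (2 * K - 1) / K ^ 2 := by
  have hlog : IntervalIntegrable (fun t => log (K * t)) volume 0 (1 / K) := by
    simpa using (intervalIntegral.intervalIntegrable_log' (a := 0) (b := 1)).comp_mul_left (c := K)
  rw [intervalIntegral.integral_sub intervalIntegrable_const hlog,
    intervalIntegral.integral_comp_mul_left (fun t => log t) hK, mul_zero, mul_one_div_cancel hK,
    integral_log_from_zero, intervalIntegral.integral_const, smul_eq_mul, smul_eq_mul, log_one]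
  field_simp
  ring

theorem integral_mul_one_sub_pow {k : ℕ} (hk : 2 ≤ k) :
    ∫ t in 1 / (k : ℝ)..1, ((k - 1) / k * (k * (1 - t) / (k - 1)) ^ k)
      = (k - 1) ^ 2 / (k ^ 2 * (k + 1)) := by
  have hk' : (2 : ℝ) ≤ k := by exact_mod_cast hk
  have hk0 : (k : ℝ) ≠ 0 := by positivity
  have hk1 : (k : ℝ) - 1 ≠ 0 := by linarith
  have hk2 : (k : ℝ) + 1 ≠ 0 := by positivity
  have hpow (t : ℝ) : (k - 1) / k * (k * (1 - t) / (k - 1)) ^ k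
      = (k - 1) / k * (k / (k - 1)) ^ k * (1 - t) ^ k := by
    rw [mul_assoc, ← mul_pow]; ring
  simp_rw [hpow]
  rw [intervalIntegral.integral_const_mul,
    intervalIntegral.integral_comp_sub_left (fun t => t ^ k) 1, sub_self, integral_pow,
    show (1 : ℝ) - 1 / k = (k - 1) / k by field_simp]
  have hcancel : ((k : ℝ) / (k - 1)) ^ k * ((k - 1) / k) ^ k = 1 := by
    rw [← mul_pow, div_mul_div_cancel₀ hk1, div_self hk0, one_pow]
  rw [zero_pow (Nat.succ_ne_zero k), sub_zero, pow_succ]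
  calc _ = ((k : ℝ) - 1) / k * ((k - 1) / k) / (k + 1)
        * ((k / (k - 1)) ^ k * ((k - 1) / k) ^ k) := by ring
    _ = _ := by rw [hcancel]; field_simp

theorem ofReal_three_mul_sub_one_div_le_setLIntegral_columnCost {k : ℕ} (hk : 2 ≤ k)
    {N : ℝ → ℝ → ℝ} (hmeas : ∀ t ∈ Ioc (0 : ℝ) 1, AEMeasurable (N · t) (volume.restrict (Ioc 0 1)))
    (hrange : ∀ t ∈ Ioc (0 : ℝ) 1, ∀ x ∈ Ioc (0 : ℝ) 1, N x t ∈ Icc 0 1)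
    (hcol : ∀ t ∈ Ioc (0 : ℝ) 1, ∫ x in Ioc 0 1, (1 - N x t) ≤ t) :
    ENNReal.ofReal ((3 * (k : ℝ) - 1) / (k * (k + 1))) ≤ ∫⁻ t in Ioc 0 1, columnCost k (N · t) := by
  have hk' : (2 : ℝ) ≤ k := by exact_mod_cast hk
  have hk0 : (0 : ℝ) < 1 / k := by positivity
  have hk1 : 1 / (k : ℝ) ≤ 1 := by rw [div_le_one (by positivity)]; linarith
  have hsmall : ENNReal.ofReal (∫ t in (0)..1 / (k : ℝ), ((k - 1) / k - log (k * t)))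
      ≤ ∫⁻ t in Ioc 0 (1 / (k : ℝ)), columnCost k (N · t) := by
    rw [intervalIntegral.integral_of_le hk0.le]
    refine ofReal_setIntegral_le_setLIntegral measurableSet_Ioc fun t ht => ?_
    have ht1 : t ∈ Ioc (0 : ℝ) 1 := ⟨ht.1, ht.2.trans hk1⟩
    exact ofReal_sub_log_le_columnCost hk (hmeas t ht1) (hrange t ht1) (hcol t ht1) ht
  have hlarge : ENNReal.ofReal (∫ t in 1 / (k : ℝ)..1, ((k - 1) / k * (k * (1 - t) / (k - 1)) ^ k))
      ≤ ∫⁻ t in Ioc (1 / (k : ℝ)) 1, columnCost k (N · t) := by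
    rw [intervalIntegral.integral_of_le hk1]
    refine ofReal_setIntegral_le_setLIntegral measurableSet_Ioc fun t ht => ?_
    have ht1 : t ∈ Ioc (0 : ℝ) 1 := ⟨hk0.trans ht.1, ht.2⟩
    exact ofReal_mul_pow_le_columnCost hk (hmeas t ht1) (hrange t ht1) (hcol t ht1) ht.2
  calc ENNReal.ofReal ((3 * (k : ℝ) - 1) / (k * (k + 1)))
      = ENNReal.ofReal ((∫ t in (0)..1 / (k : ℝ), ((k - 1) / k - log (k * t)))
          + ∫ t in 1 / (k : ℝ)..1, ((k - 1) / k * (k * (1 - t) / (k - 1)) ^ k)) := by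
        rw [integral_sub_log_mul (by positivity), integral_mul_one_sub_pow hk]
        congr 1
        field_simp
        ring
    _ ≤ _ := ENNReal.ofReal_add_le
    _ ≤ (∫⁻ t in Ioc 0 (1 / (k : ℝ)), columnCost k (N · t))
          + ∫⁻ t in Ioc (1 / (k : ℝ)) 1, columnCost k (N · t) := add_le_add hsmall hlarge
    _ = ∫⁻ t in Ioc 0 1, columnCost k (N · t) := by
        rw [← lintegral_union measurableSet_Ioc (Ioc_disjoint_Ioc_of_le le_rfl),
          Ioc_union_Ioc_eq_Ioc hk0.le hk1]

/-- For `k ≥ 2`, every continuous `N : (0,1] × [0,∞) → [0,1]` satisfying the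
column requirement `∫₀¹ (1 - N(x,t)) dx ≤ t` has
`∫₀^∞ ∫₀¹ (1/x)·N(x,t)^k dx dt ≥ (3k-1)/(k(k+1))` (in `[0,∞]`). -/
theorem upper_bound_theta (k : ℕ) (hk : 2 ≤ k) (N : ℝ → ℝ → ℝ)
    (hcont : ContinuousOn (fun p : ℝ × ℝ => N p.1 p.2) (Ioc 0 1 ×ˢ Ici 0))
    (hrange : ∀ x ∈ Ioc (0:ℝ) 1, ∀ t ∈ Ici (0:ℝ), N x t ∈ Icc (0:ℝ) 1)
    (hcol : ∀ t ∈ Ici (0:ℝ), (∫ x in Ioc (0:ℝ) 1, (1 - N x t)) ≤ t) :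
    ENNReal.ofReal ((3 * (k:ℝ) - 1) / ((k:ℝ) * ((k:ℝ) + 1))) ≤
      ∫⁻ t in Ici (0:ℝ), ∫⁻ x in Ioc (0:ℝ) 1,
        ENNReal.ofReal ((1 / x) * N x t ^ k) := by
  have hsub : Ioc (0 : ℝ) 1 ⊆ Ici 0 := Ioc_subset_Ioi_self.trans Ioi_subset_Ici_self
  have hmeas (t : ℝ) (ht : t ∈ Ioc (0 : ℝ) 1) :
      AEMeasurable (N · t) (volume.restrict (Ioc 0 1)) :=
    (hcont.comp (continuous_id.prodMk continuous_const).continuousOn fun _ hx => ⟨hx, hsub ht⟩)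
      |>.aemeasurable measurableSet_Ioc
  calc ENNReal.ofReal ((3 * (k : ℝ) - 1) / (k * (k + 1)))
      ≤ ∫⁻ t in Ioc 0 1, columnCost k (N · t) :=
        ofReal_three_mul_sub_one_div_le_setLIntegral_columnCost hk hmeas
          (fun t ht x hx => hrange x hx t (hsub ht)) (fun t ht => hcol t (hsub ht))
    _ ≤ ∫⁻ t in Ici 0, columnCost k (N · t) := lintegral_mono_set hsub
end

section
/- Let k ≥ 2 be an integer. Then ∫₀^∞ ∫₀¹ (1/x)·OPT_k(x,t)^k dx dt = (3k−1)/(k(k+1)). -/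
/-!
By Tonelli we integrate in `t` first. For fixed `x ∈ (0,1]` and `e = 1/(k-1)`, the integrand
`OPT_k(x,t)^k / x` equals `1/x` on `(0, x/k)`, `x^e (kt)^{-(e+1)}` on `(x/k, 1/k)`,
`(k/(k-1))^k x^e (1-t)^k` on `(1/k, 1)` and `0` beyond, so the `t`-integral is
`1/k + (k-1)/k·(1 - x^e) + (k-1)/(k(k+1))·x^e = 1 - (k-1)/(k+1)·x^e`.
Integrating over `x` with `∫₀¹ x^e = (k-1)/k` gives `1 - (k-1)²/(k(k+1)) = (3k-1)/(k(k+1))`.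
-/

open MeasureTheory Set
open scoped ENNReal

/-- The optimal function `OPT_k : (0,1] × [0,∞) → [0,1]`:
`OPT_k(x,t) = 1` if `t ≤ x/k`; `(x/(kt))^{1/(k-1)}` if `x/k ≤ t ≤ 1/k`;
`(k/(k-1))·(1-t)·x^{1/(k-1)}` if `1/k ≤ t ≤ 1`; and `0` if `t ≥ 1`.
(The branch values agree at the boundary points.) -/
noncomputable def OPTk (k : ℕ) (x t : ℝ) : ℝ :=
  if 1 ≤ t then 0
  else if 1 / (k:ℝ) ≤ t then ((k:ℝ) / ((k:ℝ) - 1)) * (1 - t) * x ^ ((1:ℝ) / ((k:ℝ) - 1))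
  else if x / (k:ℝ) ≤ t then (x / ((k:ℝ) * t)) ^ ((1:ℝ) / ((k:ℝ) - 1))
  else 1

lemma setLIntegral_Ioo_ofReal {a b : ℝ} (hab : a ≤ b) {f : ℝ → ℝ}
    (hf : IntervalIntegrable f volume a b) (hf₀ : ∀ t ∈ Ioo a b, 0 ≤ f t) :
    ∫⁻ t in Ioo a b, ENNReal.ofReal (f t) = ENNReal.ofReal (∫ t in a..b, f t) := by
  rw [intervalIntegral.integral_of_le hab, integral_Ioc_eq_integral_Ioo,
    ofReal_integral_eq_lintegral_ofReal
      ((intervalIntegrable_iff_integrableOn_Ioo_of_le hab).mp hf)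
      ((ae_restrict_iff' measurableSet_Ioo).mpr (ae_of_all _ hf₀))]

lemma setLIntegral_Ici_eq_add {a₀ a₁ a₂ a₃ : ℝ} (h₁ : a₀ ≤ a₁) (h₂ : a₁ ≤ a₂) (h₃ : a₂ ≤ a₃)
    (f : ℝ → ℝ≥0∞) :
    ∫⁻ t in Ici a₀, f t =
      (∫⁻ t in Ioo a₀ a₁, f t) + (∫⁻ t in Ioo a₁ a₂, f t) + (∫⁻ t in Ioo a₂ a₃, f t)
        + ∫⁻ t in Ioi a₃, f t := by
  have split {a b : ℝ} (hab : a ≤ b) :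
      ∫⁻ t in Ioi a, f t = (∫⁻ t in Ioo a b, f t) + ∫⁻ t in Ioi b, f t := by
    rw [← Ioc_union_Ioi_eq_Ioi hab, lintegral_union measurableSet_Ioi (Ioc_disjoint_Ioi le_rfl),
      setLIntegral_congr Ioo_ae_eq_Ioc]
  rw [← setLIntegral_congr Ioi_ae_eq_Ici, split h₁, split h₂, split h₃, add_assoc, add_assoc]

lemma integral_one_sub_pow (a : ℝ) (n : ℕ) :
    ∫ t in a..1, (1 - t) ^ n = (1 - a) ^ (n + 1) / (n + 1) := by
  simp [intervalIntegral.integral_comp_sub_left (fun s => s ^ n) 1, integral_pow]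

lemma one_div_sub_one_mul_self {κ : ℝ} (hκ : κ ≠ 1) : 1 / (κ - 1) * κ = 1 / (κ - 1) + 1 := by
  have : κ - 1 ≠ 0 := sub_ne_zero.mpr hκ
  field_simp
  ring

lemma integral_rpow_neg_add_one {a b r : ℝ} (ha : 0 < a) (hb : 0 < b) (hr : r ≠ 0) :
    ∫ t in a..b, t ^ (-(r + 1)) = (a ^ (-r) - b ^ (-r)) / r := by
  rw [integral_rpow (Or.inr ⟨by contrapose! hr; linarith, notMem_uIcc_of_lt ha hb⟩),
    show -(r + 1) + 1 = -r by ring, div_neg, ← neg_div, neg_sub]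

lemma setLIntegral_Ioc_one_sub_mul_rpow {c r : ℝ} (hc : c ≤ 1) (hr : 0 ≤ r) :
    ∫⁻ x in Ioc 0 1, ENNReal.ofReal (1 - c * x ^ r) = ENNReal.ofReal (1 - c / (r + 1)) := by
  have hint : IntervalIntegrable (fun x : ℝ => x ^ r) volume 0 1 :=
    intervalIntegral.intervalIntegrable_rpow' (by linarith)
  rw [← setLIntegral_congr Ioo_ae_eq_Ioc,
    setLIntegral_Ioo_ofReal zero_le_one (intervalIntegrable_const.sub (hint.const_mul c))
      fun x hx => sub_nonneg.mpr <|
        mul_le_one₀ hc (Real.rpow_nonneg hx.1.le r) (Real.rpow_le_one hx.1.le hx.2.le hr),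
    intervalIntegral.integral_sub intervalIntegrable_const (hint.const_mul c),
    intervalIntegral.integral_const_mul, integral_rpow (Or.inl (by linarith)),
    intervalIntegral.integral_const, Real.one_rpow, Real.zero_rpow (by linarith)]
  simp [div_eq_mul_inv]

section OPTk

variable {k : ℕ} {x t : ℝ}

lemma OPTk_of_one_le (ht : 1 ≤ t) : OPTk k x t = 0 := if_pos ht

lemma OPTk_of_lt_div (hk : 1 ≤ k) (hx : x ≤ 1) (ht : t < x / k) : OPTk k x t = 1 := by
  have hk₀ : (1 : ℝ) ≤ k := by exact_mod_cast hk
  have hxk : x / k ≤ 1 / k := by gcongr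
  have hk₁ : 1 / (k : ℝ) ≤ 1 := by rw [div_le_one (by positivity)]; exact hk₀
  rw [OPTk, if_neg (by linarith), if_neg (by linarith), if_neg (by linarith)]

lemma one_div_mul_OPTk_pow_of_mem_Ioo_div (hk : 2 ≤ k) (hx : 0 < x)
    (ht : t ∈ Ioo (x / k) (1 / (k : ℝ))) :
    1 / x * OPTk k x t ^ k =
      x ^ (1 / ((k : ℝ) - 1)) / (k : ℝ) ^ (1 / ((k : ℝ) - 1) + 1)
        * t ^ (-(1 / ((k : ℝ) - 1) + 1)) := by
  have hk₂ : (2 : ℝ) ≤ k := by exact_mod_cast hk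
  have hk₁ : 1 / (k : ℝ) ≤ 1 := by rw [div_le_one (by positivity)]; linarith
  have ht₀ : 0 < t := lt_trans (by positivity) ht.1
  rw [OPTk, if_neg (show ¬ (1 : ℝ) ≤ t by linarith [ht.2]), if_neg (not_le.mpr ht.2),
    if_pos ht.1.le, ← Real.rpow_natCast, ← Real.rpow_mul (by positivity),
    one_div_sub_one_mul_self (by linarith), Real.div_rpow hx.le (by positivity),
    Real.mul_rpow (by positivity) ht₀.le, Real.rpow_neg ht₀.le, Real.rpow_add hx, Real.rpow_one]
  field_simp

lemma one_div_mul_OPTk_pow_of_mem_Ioo_one (hk : 2 ≤ k) (hx : 0 < x)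
    (ht : t ∈ Ioo (1 / (k : ℝ)) 1) :
    1 / x * OPTk k x t ^ k =
      ((k : ℝ) / (k - 1)) ^ k * x ^ (1 / ((k : ℝ) - 1)) * (1 - t) ^ k := by
  have hk₂ : (2 : ℝ) ≤ k := by exact_mod_cast hk
  rw [OPTk, if_neg (not_le.mpr ht.2), if_pos ht.1.le, mul_pow, mul_pow,
    ← Real.rpow_natCast (x ^ _) k, ← Real.rpow_mul hx.le,
    one_div_sub_one_mul_self (by linarith), Real.rpow_add hx, Real.rpow_one]
  field_simp

lemma setLIntegral_Ioo_zero_OPTk (hk : 1 ≤ k) (hx : x ∈ Ioc 0 1) :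
    ∫⁻ t in Ioo 0 (x / k), ENNReal.ofReal (1 / x * OPTk k x t ^ k) =
      ENNReal.ofReal (1 / k) := by
  rw [setLIntegral_congr_fun measurableSet_Ioo fun t ht => by
      rw [OPTk_of_lt_div hk hx.2 ht.2, one_pow, mul_one],
    setLIntegral_const, Real.volume_Ioo, sub_zero,
    ← ENNReal.ofReal_mul (one_div_nonneg.mpr hx.1.le)]
  have : x ≠ 0 := hx.1.ne'
  field_simp

lemma setLIntegral_Ioi_one_OPTk (hk : 1 ≤ k) :
    ∫⁻ t in Ioi 1, ENNReal.ofReal (1 / x * OPTk k x t ^ k) = 0 := by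
  rw [setLIntegral_congr_fun measurableSet_Ioi fun t ht => by
      rw [OPTk_of_one_le (le_of_lt ht), zero_pow (by omega), mul_zero, ENNReal.ofReal_zero],
    lintegral_zero]

lemma setLIntegral_Ioo_div_OPTk (hk : 2 ≤ k) (hx : x ∈ Ioc 0 1) :
    ∫⁻ t in Ioo (x / k) (1 / k), ENNReal.ofReal (1 / x * OPTk k x t ^ k) =
      ENNReal.ofReal ((k - 1) / k * (1 - x ^ (1 / ((k : ℝ) - 1)))) := by
  have hk₂ : (2 : ℝ) ≤ k := by exact_mod_cast hk
  obtain ⟨hx₀, hx₁⟩ := hx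
  have hxk : 0 < x / k := by positivity
  have hab : x / k ≤ 1 / k := by gcongr
  rw [setLIntegral_congr_fun measurableSet_Ioo fun t ht => by
      rw [one_div_mul_OPTk_pow_of_mem_Ioo_div hk hx₀ ht],
    setLIntegral_Ioo_ofReal hab
      ((intervalIntegral.intervalIntegrable_rpow
        (Or.inr (notMem_uIcc_of_lt hxk (by positivity)))).const_mul _)
      fun t ht => by have := hxk.trans ht.1; positivity,
    intervalIntegral.integral_const_mul, integral_rpow_neg_add_one hxk (by positivity)
      (one_div_pos.mpr (by linarith)).ne', Real.rpow_neg hxk.le, Real.rpow_neg (by positivity),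
    Real.div_rpow hx₀.le (by positivity), Real.div_rpow zero_le_one (by positivity),
    Real.one_rpow, Real.rpow_add (by positivity), Real.rpow_one]
  congr 1
  have : x ^ (1 / ((k : ℝ) - 1)) ≠ 0 := by positivity
  have : (k : ℝ) ^ (1 / ((k : ℝ) - 1)) ≠ 0 := by positivity
  have : (k : ℝ) - 1 ≠ 0 := by linarith
  field_simp

lemma setLIntegral_Ioo_one_OPTk (hk : 2 ≤ k) (hx : 0 < x) :
    ∫⁻ t in Ioo (1 / (k : ℝ)) 1, ENNReal.ofReal (1 / x * OPTk k x t ^ k) =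
      ENNReal.ofReal ((k - 1) / (k * (k + 1)) * x ^ (1 / ((k : ℝ) - 1))) := by
  have hk₁ : (0 : ℝ) < k - 1 := by
    have : (2 : ℝ) ≤ k := by exact_mod_cast hk
    linarith
  rw [setLIntegral_congr_fun measurableSet_Ioo fun t ht => by
      rw [one_div_mul_OPTk_pow_of_mem_Ioo_one hk hx ht],
    setLIntegral_Ioo_ofReal (by rw [div_le_one (by positivity)]; linarith)
      (Continuous.intervalIntegrable (by fun_prop) _ _)
      fun t ht => mul_nonneg (by positivity) (pow_nonneg (by linarith [ht.2]) _),
    intervalIntegral.integral_const_mul, integral_one_sub_pow, one_sub_div (by positivity),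
    div_pow, div_pow]
  congr 1
  field_simp
  ring

lemma setLIntegral_Ici_OPTk (hk : 2 ≤ k) (hx : x ∈ Ioc 0 1) :
    ∫⁻ t in Ici 0, ENNReal.ofReal (1 / x * OPTk k x t ^ k) =
      ENNReal.ofReal (1 - (k - 1) / (k + 1) * x ^ (1 / ((k : ℝ) - 1))) := by
  have hk₂ : (2 : ℝ) ≤ k := by exact_mod_cast hk
  have hxe : x ^ (1 / ((k : ℝ) - 1)) ≤ 1 :=
    Real.rpow_le_one hx.1.le hx.2 (one_div_nonneg.mpr (by linarith))
  have hmiddle : 0 ≤ (k - 1) / k * (1 - x ^ (1 / ((k : ℝ) - 1))) :=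
    mul_nonneg (div_nonneg (by linarith) (by positivity)) (by linarith)
  have htail : 0 ≤ (k - 1) / (k * (k + 1)) * x ^ (1 / ((k : ℝ) - 1)) :=
    mul_nonneg (div_nonneg (by linarith) (by positivity)) (by have := hx.1; positivity)
  rw [setLIntegral_Ici_eq_add (a₁ := x / k) (a₂ := 1 / k) (a₃ := 1)
      (by have := hx.1; positivity) (by gcongr; exact hx.2)
      (by rw [div_le_one (by positivity)]; linarith),
    setLIntegral_Ioo_zero_OPTk (by omega) hx, setLIntegral_Ioo_div_OPTk hk hx,
    setLIntegral_Ioo_one_OPTk hk hx.1, setLIntegral_Ioi_one_OPTk (by omega), add_zero,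
    ← ENNReal.ofReal_add (by positivity) hmiddle, ← ENNReal.ofReal_add (by positivity) htail]
  congr 1
  field_simp
  ring

lemma measurable_uncurry_OPTk (k : ℕ) : Measurable (Function.uncurry (OPTk k)) := by
  unfold OPTk
  refine Measurable.ite (measurableSet_le measurable_const measurable_snd) measurable_const ?_
  refine Measurable.ite (measurableSet_le measurable_const measurable_snd) (by fun_prop) ?_
  exact Measurable.ite (measurableSet_le (measurable_fst.div measurable_const) measurable_snd)
    (by fun_prop) measurable_const

end OPTk

/-- For `k ≥ 2`,
`∫₀^∞ ∫₀¹ (1/x)·OPT_k(x,t)^k dx dt = (3k-1)/(k(k+1))`. -/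
theorem theta_OPT (k : ℕ) (hk : 2 ≤ k) :
    (∫⁻ t in Ici (0:ℝ), ∫⁻ x in Ioc (0:ℝ) 1,
        ENNReal.ofReal ((1 / x) * OPTk k x t ^ k)) =
      ENNReal.ofReal ((3 * (k:ℝ) - 1) / ((k:ℝ) * ((k:ℝ) + 1))) := by
  have hk₂ : (2 : ℝ) ≤ k := by exact_mod_cast hk
  have hmeas : Measurable
      (Function.uncurry fun t x : ℝ => ENNReal.ofReal (1 / x * OPTk k x t ^ k)) :=
    ENNReal.measurable_ofReal.comp
      ((measurable_const.div measurable_snd).mul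
        (((measurable_uncurry_OPTk k).comp measurable_swap).pow_const k))
  rw [lintegral_lintegral_swap hmeas.aemeasurable,
    setLIntegral_congr_fun measurableSet_Ioc fun x hx => setLIntegral_Ici_OPTk hk hx,
    setLIntegral_Ioc_one_sub_mul_rpow ((div_le_one (by linarith)).mpr (by linarith))
      (one_div_nonneg.mpr (by linarith))]
  congr 1
  have : (k : ℝ) - 1 ≠ 0 := by linarith
  rw [div_add_one this, add_sub_cancel]
  field_simp
  ring
end

section
/- Fix real numbers 0 ≤ ε < 1 and T ≥ 0, and an integer k ≥ 2, and let a : [ε,1] → (0,∞) be continuous. Then there exists α ≥ 0 such that the function g(x) = min(1, α·a(x)^{−1/(k−1)}) satisfies ∫_ε^1 (1 − g(x)) dx ≤ T, and for every continuous f : [ε,1] → [0,1] with ∫_ε^1 (1 − f(x)) dx ≤ T one has ∫_ε^1 a(x)·g(x)^k dx ≤ ∫_ε^1 a(x)·f(x)^k dx. -/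
/-!
Put `c = a ^ (-1/(k-1))`. The deficit `α ↦ ∫ (1 - min 1 (α c))` is continuous and falls from
`1 - ε` at `α = 0` to `0` once `α ≥ 1 / min c`, so some `α ≥ 0` makes it equal to `min T (1 - ε)`;
every admissible `f` then has `∫ f ≥ ∫ g` for `g = min 1 (α c)`. The profile `g` satisfies the
Karush–Kuhn–Tucker conditions for the multiplier `k α^(k-1)`: `a g^(k-1) = α^(k-1)` where `g < 1`
and `a ≤ α^(k-1)` where `g = 1`. Together with the tangent-line inequality for the convex map
`y ↦ y^k` this gives `k α^(k-1) (f - g) ≤ a f^k - a g^k` pointwise, and integrating finishes.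
-/

open MeasureTheory Set

section Deficit

variable {X : Type*} [MeasurableSpace X] {μ : Measure X} [IsFiniteMeasure μ]

theorem integral_one_sub {f : X → ℝ} (hf : Integrable f μ) :
    ∫ x, (1 - f x) ∂μ = μ.real univ - ∫ x, f x ∂μ := by
  rw [integral_sub (integrable_const 1) hf, integral_const, smul_eq_mul, mul_one]

theorem integral_one_sub_le_measureReal {f : X → ℝ} (hf : Integrable f μ)
    (hf0 : ∀ᵐ x ∂μ, 0 ≤ f x) : ∫ x, (1 - f x) ∂μ ≤ μ.real univ := by
  rw [integral_one_sub hf]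
  linarith [integral_nonneg_of_ae hf0]

theorem integral_le_integral_of_multiplier {F G f g : X → ℝ} {l : ℝ} (hl : 0 ≤ l)
    (hF : Integrable F μ) (hG : Integrable G μ) (hf : Integrable f μ) (hg : Integrable g μ)
    (hcost : ∫ x, (1 - f x) ∂μ ≤ ∫ x, (1 - g x) ∂μ)
    (hpt : ∀ᵐ x ∂μ, l * (f x - g x) ≤ F x - G x) :
    ∫ x, G x ∂μ ≤ ∫ x, F x ∂μ := by
  rw [integral_one_sub hf, integral_one_sub hg] at hcost
  have hmono : ∫ x, l * (f x - g x) ∂μ ≤ ∫ x, (F x - G x) ∂μ :=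
    integral_mono_ae ((hf.sub hg).const_mul l) (hF.sub hG) hpt
  rw [integral_const_mul, integral_sub hf hg, integral_sub hF hG] at hmono
  nlinarith

theorem continuousOn_integral_one_sub_min {c : X → ℝ} (hc : AEStronglyMeasurable c μ)
    (hc0 : ∀ᵐ x ∂μ, 0 ≤ c x) :
    ContinuousOn (fun α : ℝ => ∫ x, (1 - min 1 (α * c x)) ∂μ) (Ici 0) := by
  refine continuousOn_of_dominated (bound := fun _ => 1) (fun α _ => ?_) (fun α hα => ?_)
    (integrable_const 1) (ae_of_all _ fun x => by fun_prop)
  · exact aestronglyMeasurable_const.sub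
      (aestronglyMeasurable_const.inf (aestronglyMeasurable_const.mul hc))
  · filter_upwards [hc0] with x hx
    have hαc : 0 ≤ α * c x := mul_nonneg hα hx
    rw [Real.norm_eq_abs, abs_le]
    constructor <;> linarith [min_le_left 1 (α * c x), le_min zero_le_one hαc]

theorem exists_integral_one_sub_min_eq {c : X → ℝ} (hc : AEStronglyMeasurable c μ) {m : ℝ}
    (hm : 0 < m) (hcm : ∀ᵐ x ∂μ, m ≤ c x) {t : ℝ} (ht : t ∈ Icc 0 (μ.real univ)) :
    ∃ α, 0 ≤ α ∧ ∫ x, (1 - min 1 (α * c x)) ∂μ = t := by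
  have hcont := (continuousOn_integral_one_sub_min hc
    (hcm.mono fun x hx => hm.le.trans hx)).mono (Icc_subset_Ici_self : Icc 0 m⁻¹ ⊆ Ici 0)
  have hzero : ∫ x, (1 - min 1 ((0 : ℝ) * c x)) ∂μ = μ.real univ := by
    simp [integral_const]
  have hfull : ∫ x, (1 - min 1 (m⁻¹ * c x)) ∂μ = 0 := by
    refine integral_eq_zero_of_ae (hcm.mono fun x hx => ?_)
    have : 1 ≤ m⁻¹ * c x := by rw [inv_mul_eq_div, one_le_div hm]; exact hx
    simp [min_eq_left this]
  obtain ⟨α, hα, hαt⟩ :=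
    intermediate_value_Icc' (inv_pos.2 hm).le hcont (by rwa [hzero, hfull])
  exact ⟨α, hα.1, hαt⟩

end Deficit

theorem mul_sub_le_mul_pow_sub_mul_pow {k : ℕ} {a l f g : ℝ} (ha : 0 ≤ a) (hf : 0 ≤ f)
    (hf1 : f ≤ 1) (hg : 0 ≤ g) (hkkt : (g = 1 ∧ a ≤ l) ∨ a * g ^ (k - 1) = l) :
    k * l * (f - g) ≤ a * f ^ k - a * g ^ k := by
  have htangent : g ^ k + k * g ^ (k - 1) * (f - g) ≤ f ^ k := by
    simpa using pow_add_mul_le_add_pow hg (by linarith : 0 ≤ 2 * g + (f - g)) k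
  have hscaled := mul_le_mul_of_nonneg_left htangent ha
  rcases hkkt with ⟨rfl, hal⟩ | rfl
  · have : (k : ℝ) * (l - a) * (f - 1) ≤ 0 :=
      mul_nonpos_of_nonneg_of_nonpos (by positivity) (by linarith)
    simp only [one_pow, mul_one] at hscaled ⊢
    nlinarith
  · linarith

theorem rpow_neg_one_div_sub_one_pow_sub_one {k : ℕ} (hk : 1 < k) {a : ℝ} (ha : 0 < a) :
    (a ^ (-(1 : ℝ) / ((k : ℝ) - 1))) ^ (k - 1) = a⁻¹ := by
  have hk1 : ((k - 1 : ℕ) : ℝ) = (k : ℝ) - 1 := by rw [Nat.cast_sub hk.le, Nat.cast_one]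
  have hne : (k : ℝ) - 1 ≠ 0 := by rw [← hk1]; exact_mod_cast (Nat.sub_pos_of_lt hk).ne'
  rw [← Real.rpow_natCast, ← Real.rpow_mul ha.le, hk1, div_mul_cancel₀ _ hne, Real.rpow_neg_one]

theorem mul_sub_min_le_mul_pow_sub_mul_pow {k : ℕ} (hk : 1 < k) {a α f : ℝ} (ha : 0 < a)
    (hα : 0 ≤ α) (hf : 0 ≤ f) (hf1 : f ≤ 1) :
    k * α ^ (k - 1) * (f - min 1 (α * a ^ (-(1 : ℝ) / ((k : ℝ) - 1)))) ≤
      a * f ^ k - a * min 1 (α * a ^ (-(1 : ℝ) / ((k : ℝ) - 1))) ^ k := by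
  set c := a ^ (-(1 : ℝ) / ((k : ℝ) - 1))
  have hc : c ^ (k - 1) = a⁻¹ := rpow_neg_one_div_sub_one_pow_sub_one hk ha
  refine mul_sub_le_mul_pow_sub_mul_pow ha.le hf hf1
    (le_min zero_le_one (mul_nonneg hα (Real.rpow_nonneg ha.le _))) ?_
  rcases le_or_gt 1 (α * c) with h | h
  · refine Or.inl ⟨min_eq_left h, ?_⟩
    have : 1 ≤ α ^ (k - 1) * a⁻¹ := by simpa [mul_pow, hc] using one_le_pow₀ (n := k - 1) h
    rwa [← div_eq_mul_inv, one_le_div ha] at this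
  · right
    rw [min_eq_right h.le, mul_pow, hc]
    field_simp

theorem min_lemma_closed_general (ε : ℝ) (hε1 : ε < 1) (T : ℝ) (hT : 0 ≤ T)
    (k : ℕ) (hk : 2 ≤ k) (a : ℝ → ℝ)
    (hacont : ContinuousOn a (Icc ε 1)) (hapos : ∀ x ∈ Icc ε 1, 0 < a x) :
    ∃ α : ℝ, 0 ≤ α ∧
      (∫ x in Icc ε 1, (1 - min 1 (α * a x ^ (-(1:ℝ) / ((k:ℝ) - 1))))) ≤ T ∧
      ∀ f : ℝ → ℝ, ContinuousOn f (Icc ε 1) →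
        (∀ x ∈ Icc ε 1, f x ∈ Icc (0:ℝ) 1) →
        (∫ x in Icc ε 1, (1 - f x)) ≤ T →
        (∫ x in Icc ε 1, a x * (min 1 (α * a x ^ (-(1:ℝ) / ((k:ℝ) - 1)))) ^ k) ≤
          ∫ x in Icc ε 1, a x * f x ^ k := by
  have hc : ContinuousOn (fun x => a x ^ (-(1:ℝ) / ((k:ℝ) - 1))) (Icc ε 1) :=
    hacont.rpow_const fun x hx => Or.inl (hapos x hx).ne'
  obtain ⟨x₀, hx₀, hmin⟩ := isCompact_Icc.exists_isMinOn (nonempty_Icc.2 hε1.le) hc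
  have hvol : (volume.restrict (Icc ε 1)).real univ = 1 - ε := by
    rw [measureReal_restrict_apply_univ, Real.volume_real_Icc, max_eq_left (by linarith)]
  obtain ⟨α, hα, hgα⟩ := exists_integral_one_sub_min_eq (hc.aestronglyMeasurable measurableSet_Icc)
    (Real.rpow_pos_of_pos (hapos x₀ hx₀) _) (ae_restrict_of_forall_mem measurableSet_Icc hmin)
    (t := min T (1 - ε)) ⟨le_min hT (by linarith), by rw [hvol]; exact min_le_right _ _⟩
  refine ⟨α, hα, hgα.trans_le (min_le_left _ _), fun f hf hf01 hfT => ?_⟩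
  have hg : ContinuousOn (fun x => min 1 (α * a x ^ (-(1:ℝ) / ((k:ℝ) - 1)))) (Icc ε 1) :=
    continuousOn_const.inf (continuousOn_const.mul hc)
  refine integral_le_integral_of_multiplier (l := k * α ^ (k - 1)) (by positivity)
    (hacont.mul (hf.pow k)).integrableOn_Icc (hacont.mul (hg.pow k)).integrableOn_Icc
    hf.integrableOn_Icc hg.integrableOn_Icc ?_ ?_
  · refine hgα ▸ le_min hfT (hvol ▸ integral_one_sub_le_measureReal hf.integrableOn_Icc ?_)
    exact ae_restrict_of_forall_mem measurableSet_Icc fun x hx => (hf01 x hx).1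
  · exact ae_restrict_of_forall_mem measurableSet_Icc fun x hx =>
      mul_sub_min_le_mul_pow_sub_mul_pow hk (hapos x hx) hα (hf01 x hx).1 (hf01 x hx).2

/-- minimization lemma on a closed interval: For `0 ≤ ε < 1`, `T ≥ 0`,
`k ≥ 2`, and a continuous positive weight `a : [ε,1] → (0,∞)`, there is an `α ≥ 0` such
that `g(x) = min(1, α·a(x)^{-1/(k-1)})` satisfies `∫_ε^1 (1 - g) ≤ T` and minimizes
`∫_ε^1 a·f^k` among all continuous `f : [ε,1] → [0,1]` with `∫_ε^1 (1 - f) ≤ T`. -/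
theorem min_lemma_closed (ε : ℝ) (hε : 0 ≤ ε) (hε1 : ε < 1) (T : ℝ) (hT : 0 ≤ T)
    (k : ℕ) (hk : 2 ≤ k) (a : ℝ → ℝ)
    (hacont : ContinuousOn a (Icc ε 1)) (hapos : ∀ x ∈ Icc ε 1, 0 < a x) :
    ∃ α : ℝ, 0 ≤ α ∧
      (∫ x in Icc ε 1, (1 - min 1 (α * a x ^ (-(1:ℝ) / ((k:ℝ) - 1))))) ≤ T ∧
      ∀ f : ℝ → ℝ, ContinuousOn f (Icc ε 1) →
        (∀ x ∈ Icc ε 1, f x ∈ Icc (0:ℝ) 1) →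
        (∫ x in Icc ε 1, (1 - f x)) ≤ T →
        (∫ x in Icc ε 1, a x * (min 1 (α * a x ^ (-(1:ℝ) / ((k:ℝ) - 1)))) ^ k) ≤
          ∫ x in Icc ε 1, a x * f x ^ k :=
  min_lemma_closed_general ε hε1 T hT k hk a hacont hapos
end

section
/- Let M ≥ 1 be an integer and let N : {1,…,M} × ℕ → [0,1] satisfy Σ_{x=1}^M (1 − N(x,t)) ≤ t for every t ∈ ℕ. Then (1/M) · Σ_{x=1}^M (1/x) · Σ_{t=0}^∞ N(x,t) ≥ 1, where the inner infinite sum is taken in the extended nonnegative reals [0,∞]. -/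
/-! For each time `t`, the column requirement gives `∑ₓ N(x,t) ≥ M - t`. Since the weights
`1/x` decrease, `∑ₓ N(x,t)/x` is then at least its value for the column `1[x > t]`: compare
both columns against the threshold weight `1/(t+1)`. Summed over `t < M`, these indicator
columns contribute `∑ₓ x · (1/x) = M`, and the remaining times only add to the left side. -/

open ENNReal Finset

theorem Finset.sum_mul_le_sum_mul_of_sub_mul_sub_nonpos {ι : Type*} {s : Finset ι}
    {f g w : ι → ℝ} {c : ℝ} (hc : 0 ≤ c) (hgf : ∑ i ∈ s, g i ≤ ∑ i ∈ s, f i)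
    (h : ∀ i ∈ s, (g i - f i) * (w i - c) ≤ 0) :
    ∑ i ∈ s, w i * g i ≤ ∑ i ∈ s, w i * f i := by
  have hsum := sum_nonpos h
  simp only [sub_mul, mul_sub, sum_sub_distrib, ← sum_mul] at hsum
  simp only [mul_comm (w _)]
  nlinarith [mul_le_mul_of_nonneg_right hgf hc]

theorem sum_range_ite_lt_one_div {x M : ℕ} (hx : x ∈ Icc 1 M) :
    ∑ t ∈ range M, (if t < x then 1 / (x:ℝ) else 0) = 1 := by
  obtain ⟨hx1, hxM⟩ := mem_Icc.mp hx
  have hfilter : (range M).filter (· < x) = range x := by ext; simp; omega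
  rw [← sum_filter, hfilter, sum_const, card_range, nsmul_eq_mul]
  field_simp

section ColumnRequirement

variable {M : ℕ} {N : ℕ → ℕ → ℝ}

theorem sum_boole_lt_le_sum_of_column
    (hrange : ∀ x ∈ Icc 1 M, ∀ t : ℕ, N x t ∈ Set.Icc (0:ℝ) 1)
    (hcol : ∀ t : ℕ, (∑ x ∈ Icc 1 M, (1 - N x t)) ≤ t) (t : ℕ) :
    ∑ x ∈ Icc 1 M, (if t < x then (1:ℝ) else 0) ≤ ∑ x ∈ Icc 1 M, N x t := by
  have hfilter : (Icc 1 M).filter (t < ·) = Ioc t M := by ext; simp; omega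
  rw [sum_boole, hfilter, Nat.card_Ioc]
  have hN : (M : ℝ) - t ≤ ∑ x ∈ Icc 1 M, N x t := by
    have := hcol t
    simp only [sum_sub_distrib, sum_const, Nat.card_Icc, add_tsub_cancel_right,
      nsmul_eq_mul, mul_one] at this
    linarith
  rcases le_total t M with htM | hMt
  · rwa [Nat.cast_sub htM]
  · rw [Nat.sub_eq_zero_of_le hMt, Nat.cast_zero]
    exact sum_nonneg fun x hx => (hrange x hx t).1

theorem sum_ite_lt_one_div_le_sum_one_div_mul_of_column
    (hrange : ∀ x ∈ Icc 1 M, ∀ t : ℕ, N x t ∈ Set.Icc (0:ℝ) 1)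
    (hcol : ∀ t : ℕ, (∑ x ∈ Icc 1 M, (1 - N x t)) ≤ t) (t : ℕ) :
    ∑ x ∈ Icc 1 M, (if t < x then 1 / (x:ℝ) else 0) ≤
      ∑ x ∈ Icc 1 M, 1 / (x:ℝ) * N x t := by
  rw [← sum_congr rfl fun x _ => mul_boole (t < x) (1 / (x:ℝ))]
  refine sum_mul_le_sum_mul_of_sub_mul_sub_nonpos (c := 1 / ((t:ℝ) + 1)) (by positivity)
    (sum_boole_lt_le_sum_of_column hrange hcol t) fun x hx => ?_
  obtain ⟨hN0, hN1⟩ := hrange x hx t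
  have hx0 : (0:ℝ) < x := by exact_mod_cast (mem_Icc.mp hx).1
  split_ifs with htx
  · have : 1 / (x:ℝ) ≤ 1 / ((t:ℝ) + 1) :=
      one_div_le_one_div_of_le (by positivity) (by exact_mod_cast htx)
    nlinarith
  · have : 1 / ((t:ℝ) + 1) ≤ 1 / (x:ℝ) := one_div_le_one_div_of_le hx0 (by norm_cast; omega)
    nlinarith

theorem le_sum_one_div_mul_sum_range_of_column
    (hrange : ∀ x ∈ Icc 1 M, ∀ t : ℕ, N x t ∈ Set.Icc (0:ℝ) 1)
    (hcol : ∀ t : ℕ, (∑ x ∈ Icc 1 M, (1 - N x t)) ≤ t) :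
    (M : ℝ) ≤ ∑ x ∈ Icc 1 M, 1 / (x:ℝ) * ∑ t ∈ range M, N x t :=
  calc (M : ℝ) = ∑ t ∈ range M, ∑ x ∈ Icc 1 M, (if t < x then 1 / (x:ℝ) else 0) := by
        rw [sum_comm, sum_congr rfl fun x hx => sum_range_ite_lt_one_div hx]
        simp
    _ ≤ ∑ t ∈ range M, ∑ x ∈ Icc 1 M, 1 / (x:ℝ) * N x t :=
        sum_le_sum fun t _ => sum_ite_lt_one_div_le_sum_one_div_mul_of_column hrange hcol t
    _ = ∑ x ∈ Icc 1 M, 1 / (x:ℝ) * ∑ t ∈ range M, N x t := by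
        rw [sum_comm]; simp only [mul_sum]

end ColumnRequirement

/-- For `M ≥ 1` and a matrix `N : {1,…,M} × ℕ → [0,1]` satisfying the
discrete column requirement `Σ_{x=1}^M (1 - N(x,t)) ≤ t`, the inverse speed-up of one
searcher, `(1/M)·Σ_{x=1}^M (1/x)·Σ_{t≥0} N(x,t)` (inner sum in `[0,∞]`), is at least 1. -/
theorem one_searcher (M : ℕ) (hM : 1 ≤ M) (N : ℕ → ℕ → ℝ)
    (hrange : ∀ x ∈ Finset.Icc 1 M, ∀ t : ℕ, N x t ∈ Set.Icc (0:ℝ) 1)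
    (hcol : ∀ t : ℕ, (∑ x ∈ Finset.Icc 1 M, (1 - N x t)) ≤ t) :
    (1 : ℝ≥0∞) ≤ ENNReal.ofReal (1 / (M:ℝ)) *
      ∑ x ∈ Finset.Icc 1 M, ENNReal.ofReal (1 / (x:ℝ)) *
        ∑' t : ℕ, ENNReal.ofReal (N x t) := by
  have hM0 : (0:ℝ) < M := by exact_mod_cast hM
  have hN0 : ∀ x ∈ Icc 1 M, ∀ t, 0 ≤ N x t := fun x hx t => (hrange x hx t).1
  calc (1 : ℝ≥0∞) = ENNReal.ofReal (1 / (M:ℝ)) * ENNReal.ofReal M := by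
        rw [← ENNReal.ofReal_mul (by positivity), one_div_mul_cancel hM0.ne', ENNReal.ofReal_one]
    _ ≤ ENNReal.ofReal (1 / (M:ℝ)) *
          ENNReal.ofReal (∑ x ∈ Icc 1 M, 1 / (x:ℝ) * ∑ t ∈ range M, N x t) := by
        gcongr
        exact le_sum_one_div_mul_sum_range_of_column hrange hcol
    _ = ENNReal.ofReal (1 / (M:ℝ)) *
          ∑ x ∈ Icc 1 M,
            ENNReal.ofReal (1 / (x:ℝ)) * ∑ t ∈ range M, ENNReal.ofReal (N x t) := by
        rw [ENNReal.ofReal_sum_of_nonneg fun x hx => by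
          have := sum_nonneg fun t (_ : t ∈ range M) => hN0 x hx t
          positivity]
        refine congrArg _ (sum_congr rfl fun x hx => ?_)
        rw [ENNReal.ofReal_mul (by positivity), ENNReal.ofReal_sum_of_nonneg fun t _ => hN0 x hx t]
    _ ≤ _ := by
        gcongr
        exact ENNReal.sum_le_tsum _
end

section
/- Let M ≥ 1 and t be integers with 0 ≤ t ≤ M, and let f : {1,…,M} → [0,1] satisfy Σ_{x=1}^M (1 − f(x)) ≤ t. Then Σ_{x=1}^M f(x)/x ≥ Σ_{x=t+1}^M 1/x. -/
/-! Put all the mass of `f` on the small `x`: the deficit `Σ_{x>t} (1 - f x)` is paid for by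
`Σ_{x≤t} f x`, and the weight `1/x` is at most `1/(t+1)` on the former indices and at least
`1/(t+1)` on the latter, so moving mass to `x ≤ t` can only increase `Σ f x / x`. -/

open Finset

theorem Finset.sum_mul_le_sum_mul_of_weight_le_le {ι R : Type*} [Semiring R] [PartialOrder R]
    [IsOrderedRing R] {A B : Finset ι} {g h w : ι → R} {c : R} (hc : 0 ≤ c)
    (hg : ∀ x ∈ A, 0 ≤ g x) (hh : ∀ x ∈ B, 0 ≤ h x)
    (hwA : ∀ x ∈ A, c ≤ w x) (hwB : ∀ x ∈ B, w x ≤ c) (hmass : ∑ x ∈ B, h x ≤ ∑ x ∈ A, g x) :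
    ∑ x ∈ B, h x * w x ≤ ∑ x ∈ A, g x * w x :=
  calc ∑ x ∈ B, h x * w x
      ≤ ∑ x ∈ B, h x * c := sum_le_sum fun x hx => mul_le_mul_of_nonneg_left (hwB x hx) (hh x hx)
    _ = (∑ x ∈ B, h x) * c := (sum_mul ..).symm
    _ ≤ (∑ x ∈ A, g x) * c := mul_le_mul_of_nonneg_right hmass hc
    _ = ∑ x ∈ A, g x * c := sum_mul ..
    _ ≤ ∑ x ∈ A, g x * w x := sum_le_sum fun x hx => mul_le_mul_of_nonneg_left (hwA x hx) (hg x hx)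

theorem Finset.sum_Icc_one_add_sum_Icc_succ {M : Type*} [AddCommMonoid M] (φ : ℕ → M)
    {t n : ℕ} (ht : t ≤ n) :
    ∑ x ∈ Icc 1 t, φ x + ∑ x ∈ Icc (t + 1) n, φ x = ∑ x ∈ Icc 1 n, φ x := by
  simpa only [← Icc_add_one_left_eq_Ioc, zero_add] using
    sum_Ioc_consecutive φ (Nat.zero_le t) ht

theorem per_column_min_general (M : ℕ) (t : ℕ) (ht : t ≤ M) (f : ℕ → ℝ)
    (hrange : ∀ x ∈ Finset.Icc 1 M, f x ∈ Set.Icc (0:ℝ) 1)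
    (hcol : (∑ x ∈ Finset.Icc 1 M, (1 - f x)) ≤ t) :
    (∑ x ∈ Finset.Icc (t + 1) M, 1 / (x:ℝ)) ≤ ∑ x ∈ Finset.Icc 1 M, f x / x := by
  have hlow : ∀ x ∈ Icc 1 t, x ∈ Icc 1 M := fun x hx => Icc_subset_Icc_right ht hx
  have hhigh : ∀ x ∈ Icc (t + 1) M, x ∈ Icc 1 M := fun x hx => Icc_subset_Icc_left (by omega) hx
  have hmass : ∑ x ∈ Icc (t + 1) M, (1 - f x) ≤ ∑ x ∈ Icc 1 t, f x := by
    have hlow_deficit : ∑ x ∈ Icc 1 t, (1 - f x) = t - ∑ x ∈ Icc 1 t, f x := by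
      simp [sum_sub_distrib]
    rw [← sum_Icc_one_add_sum_Icc_succ _ ht, hlow_deficit] at hcol
    linarith
  have hexchange :
      ∑ x ∈ Icc (t + 1) M, (1 - f x) * (x : ℝ)⁻¹ ≤ ∑ x ∈ Icc 1 t, f x * (x : ℝ)⁻¹ := by
    refine sum_mul_le_sum_mul_of_weight_le_le (c := ((t : ℝ) + 1)⁻¹) (by positivity)
      (fun x hx => (hrange x (hlow x hx)).1) (fun x hx => sub_nonneg.2 (hrange x (hhigh x hx)).2)
      (fun x hx => ?_) (fun x hx => ?_) hmass <;> rw [mem_Icc] at hx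
    · exact inv_anti₀ (by exact_mod_cast hx.1) (by exact_mod_cast hx.2.trans t.le_succ)
    · exact inv_anti₀ (by positivity) (by exact_mod_cast hx.1)
  simp only [div_eq_mul_inv, one_mul, sub_mul, sum_sub_distrib] at hexchange ⊢
  rw [← sum_Icc_one_add_sum_Icc_succ _ ht]
  linarith

/-- per-column minimization: For integers `1 ≤ M` and `0 ≤ t ≤ M`, and
`f : {1,…,M} → [0,1]` with `Σ_{x=1}^M (1 - f(x)) ≤ t`, we have
`Σ_{x=1}^M f(x)/x ≥ Σ_{x=t+1}^M 1/x`. -/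
theorem per_column_min (M : ℕ) (hM : 1 ≤ M) (t : ℕ) (ht : t ≤ M) (f : ℕ → ℝ)
    (hrange : ∀ x ∈ Finset.Icc 1 M, f x ∈ Set.Icc (0:ℝ) 1)
    (hcol : (∑ x ∈ Finset.Icc 1 M, (1 - f x)) ≤ t) :
    (∑ x ∈ Finset.Icc (t + 1) M, 1 / (x:ℝ)) ≤ ∑ x ∈ Finset.Icc 1 M, f x / x :=
  per_column_min_general M t ht f hrange hcol
end

section
/- Let k ≥ 1 and M ≥ 1 be integers and let N_A : {1,…,M} × ℕ → [0,1] satisfy Σ_{x=1}^M (1 − N_A(x,t)) ≤ t for every t ∈ ℕ. Define N : [1, M+1) × [0,∞) → [0,1] by N(x,t) = N_A(⌊x⌋, ⌊t⌋). Then: (i) for every real t ≥ 0, ∫₁^{M+1} (1 − N(x,t)) dx ≤ t; and (ii) ∫₁^{M+1} ∫₀^∞ (1/x)·N(x,t)^k dt dx ≤ Σ_{x=1}^M (1/x) · Σ_{t=0}^∞ N_A(x,t)^k, where both sides are taken in the extended nonnegative reals [0,∞]. -/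
open MeasureTheory Set ENNReal

/-! The integrand of (i) is constant on each cell `[n, n+1)` in `x`, and that of (ii), up to the
weight `1/x`, on each cell `[n, n+1) × [m, m+1)`, so the integrals become sums over the matrix.
On the cells of row `n` the weight `1/x` is at most `1/n`, which gives (ii); (i) is the discrete
column requirement at `⌊t⌋ ≤ t`. -/

lemma pairwise_disjoint_Ico_natCast_add_one :
    Pairwise (Function.onFun Disjoint fun n : ℕ => Ico (n : ℝ) (n + 1)) := by
  intro a b hab
  rw [Function.onFun, Set.disjoint_left]
  intro x hxa hxb
  exact hab ((Nat.floor_eq_on_Ico a x hxa).symm.trans (Nat.floor_eq_on_Ico b x hxb))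

lemma Ico_natCast_eq_biUnion_Ico (a b : ℕ) :
    Ico (a : ℝ) (b + 1) = ⋃ n ∈ Finset.Icc a b, Ico (n : ℝ) (n + 1) := by
  ext x
  simp only [mem_Ico, mem_iUnion, Finset.mem_Icc, exists_prop]
  constructor
  · rintro ⟨hax, hxb⟩
    have hx : 0 ≤ x := (Nat.cast_nonneg a).trans hax
    have hfloor : ⌊x⌋₊ < b + 1 := by
      rw [Nat.floor_lt hx]
      exact_mod_cast hxb
    exact ⟨⌊x⌋₊, ⟨Nat.le_floor hax, by omega⟩, Nat.floor_le hx, Nat.lt_floor_add_one x⟩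
  · rintro ⟨n, ⟨han, hnb⟩, hnx, hxn⟩
    have han' : (a : ℝ) ≤ n := by exact_mod_cast han
    have hnb' : (n : ℝ) ≤ b := by exact_mod_cast hnb
    exact ⟨by linarith, by linarith⟩

lemma Ici_zero_eq_iUnion_Ico : Ici (0 : ℝ) = ⋃ n : ℕ, Ico (n : ℝ) (n + 1) := by
  ext t
  simp only [mem_Ici, mem_iUnion, mem_Ico]
  constructor
  · intro ht
    exact ⟨⌊t⌋₊, Nat.floor_le ht, Nat.lt_floor_add_one t⟩
  · rintro ⟨n, hnt, -⟩
    exact (Nat.cast_nonneg n).trans hnt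

lemma setIntegral_Ico_comp_floor {E : Type*} [NormedAddCommGroup E] [NormedSpace ℝ E]
    [CompleteSpace E] (f : ℕ → E) (a b : ℕ) :
    ∫ x in Ico (a : ℝ) (b + 1), f ⌊x⌋₊ = ∑ n ∈ Finset.Icc a b, f n := by
  have on_cell : ∀ n : ℕ, EqOn (fun x : ℝ => f ⌊x⌋₊) (fun _ => f n) (Ico (n : ℝ) (n + 1)) :=
    fun n x hx => by simp only [Nat.floor_eq_on_Ico n x hx]
  rw [Ico_natCast_eq_biUnion_Ico, integral_biUnion_finset _ (fun _ _ => measurableSet_Ico)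
    (pairwise_disjoint_Ico_natCast_add_one.set_pairwise _)
    (fun n _ => (integrableOn_const measure_Ico_lt_top.ne).congr_fun (on_cell n).symm
      measurableSet_Ico)]
  refine Finset.sum_congr rfl fun n _ => ?_
  rw [setIntegral_congr_fun measurableSet_Ico (on_cell n), setIntegral_const,
    Real.volume_real_Ico]
  simp

lemma setLIntegral_Ico_natCast_eq_sum (f : ℝ → ℝ≥0∞) (a b : ℕ) :
    ∫⁻ x in Ico (a : ℝ) (b + 1), f x = ∑ n ∈ Finset.Icc a b, ∫⁻ x in Ico (n : ℝ) (n + 1), f x := by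
  rw [Ico_natCast_eq_biUnion_Ico, lintegral_biUnion_finset
    (pairwise_disjoint_Ico_natCast_add_one.set_pairwise _) (fun _ _ => measurableSet_Ico)]

lemma setLIntegral_Ici_zero_comp_floor (g : ℕ → ℝ≥0∞) :
    ∫⁻ t in Ici (0 : ℝ), g ⌊t⌋₊ = ∑' n : ℕ, g n := by
  rw [Ici_zero_eq_iUnion_Ico,
    lintegral_iUnion (fun _ => measurableSet_Ico) pairwise_disjoint_Ico_natCast_add_one]
  refine tsum_congr fun n => ?_
  rw [setLIntegral_congr_fun measurableSet_Ico (fun t ht => by rw [Nat.floor_eq_on_Ico n t ht]),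
    setLIntegral_const, Real.volume_Ico]
  simp

lemma setLIntegral_Ico_natCast_le {f : ℝ → ℝ≥0∞} {c : ℝ≥0∞} (n : ℕ)
    (hf : ∀ x ∈ Ico (n : ℝ) (n + 1), f x ≤ c) :
    ∫⁻ x in Ico (n : ℝ) (n + 1), f x ≤ c := by
  calc ∫⁻ x in Ico (n : ℝ) (n + 1), f x ≤ ∫⁻ _ in Ico (n : ℝ) (n + 1), c :=
        setLIntegral_mono' measurableSet_Ico hf
    _ = c := by simp [Real.volume_Ico]

lemma ofReal_inv_mul_le_of_natCast_le {n : ℕ} {x a : ℝ} (hn : 1 ≤ n) (hx : (n : ℝ) ≤ x)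
    (ha : 0 ≤ a) : ENNReal.ofReal (1 / x * a) ≤ ENNReal.ofReal (1 / n) * ENNReal.ofReal a := by
  have hn0 : (0 : ℝ) < n := by exact_mod_cast hn
  rw [← ENNReal.ofReal_mul (by positivity)]
  exact ENNReal.ofReal_le_ofReal
    (mul_le_mul_of_nonneg_right (one_div_le_one_div_of_le hn0 hx) ha)

theorem matrix_to_function_general (k M : ℕ) (NA : ℕ → ℕ → ℝ)
    (hrange : ∀ x ∈ Finset.Icc 1 M, ∀ t : ℕ, NA x t ∈ Set.Icc (0:ℝ) 1)
    (hcol : ∀ t : ℕ, (∑ x ∈ Finset.Icc 1 M, (1 - NA x t)) ≤ t) :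
    (∀ t : ℝ, 0 ≤ t →
      (∫ x in Ico (1:ℝ) ((M:ℝ) + 1), (1 - NA ⌊x⌋₊ ⌊t⌋₊)) ≤ t) ∧
    (∫⁻ x in Ico (1:ℝ) ((M:ℝ) + 1), ∫⁻ t in Ici (0:ℝ),
        ENNReal.ofReal ((1 / x) * NA ⌊x⌋₊ ⌊t⌋₊ ^ k)) ≤
      ∑ x ∈ Finset.Icc 1 M, ENNReal.ofReal (1 / (x:ℝ)) *
        ∑' t : ℕ, ENNReal.ofReal (NA x t ^ k) := by
  refine ⟨fun t ht => ?_, ?_⟩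
  · have hcells := setIntegral_Ico_comp_floor (fun n => 1 - NA n ⌊t⌋₊) 1 M
    rw [Nat.cast_one] at hcells
    rw [hcells]
    exact (hcol ⌊t⌋₊).trans (Nat.floor_le ht)
  · have hrows := setLIntegral_Ico_natCast_eq_sum
      (fun x => ∫⁻ t in Ici (0:ℝ), ENNReal.ofReal ((1 / x) * NA ⌊x⌋₊ ⌊t⌋₊ ^ k)) 1 M
    rw [Nat.cast_one] at hrows
    rw [hrows]
    refine Finset.sum_le_sum fun n hn => setLIntegral_Ico_natCast_le n fun x hx => ?_
    rw [Nat.floor_eq_on_Ico n x hx, ← ENNReal.tsum_mul_left,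
      ← setLIntegral_Ici_zero_comp_floor]
    exact setLIntegral_mono' measurableSet_Ici fun t _ =>
      ofReal_inv_mul_le_of_natCast_le (Finset.mem_Icc.mp hn).1 hx.1
        (pow_nonneg (hrange n hn _).1 k)

/-- from matrices to functions: Let `N_A : {1,…,M} × ℕ → [0,1]` satisfy
the discrete column requirement, and define `N(x,t) = N_A(⌊x⌋,⌊t⌋)` on
`[1,M+1) × [0,∞)`. Then (i) `N` satisfies the continuous column requirement, and
(ii) `∫₁^{M+1} ∫₀^∞ (1/x)·N(x,t)^k dt dx ≤ Σ_{x=1}^M (1/x)·Σ_{t≥0} N_A(x,t)^k`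
(both sides in `[0,∞]`). -/
theorem matrix_to_function (k M : ℕ) (hk : 1 ≤ k) (hM : 1 ≤ M) (NA : ℕ → ℕ → ℝ)
    (hrange : ∀ x ∈ Finset.Icc 1 M, ∀ t : ℕ, NA x t ∈ Set.Icc (0:ℝ) 1)
    (hcol : ∀ t : ℕ, (∑ x ∈ Finset.Icc 1 M, (1 - NA x t)) ≤ t) :
    (∀ t : ℝ, 0 ≤ t →
      (∫ x in Ico (1:ℝ) ((M:ℝ) + 1), (1 - NA ⌊x⌋₊ ⌊t⌋₊)) ≤ t) ∧
    (∫⁻ x in Ico (1:ℝ) ((M:ℝ) + 1), ∫⁻ t in Ici (0:ℝ),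
        ENNReal.ofReal ((1 / x) * NA ⌊x⌋₊ ⌊t⌋₊ ^ k)) ≤
      ∑ x ∈ Finset.Icc 1 M, ENNReal.ofReal (1 / (x:ℝ)) *
        ∑' t : ℕ, ENNReal.ofReal (NA x t ^ k) :=
  matrix_to_function_general k M NA hrange hcol
end

section
/- For all integers b ≥ a ≥ 1 and every real φ with 0 < φ ≤ 1, the product ∏_{i=a}^{b} i/(i+φ) is at most (a/b)^φ. -/
/-! Bernoulli's inequality `(1 + 1/i)^φ ≤ 1 + φ/i` for `0 ≤ φ ≤ 1` bounds each factor by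
`i/(i+φ) ≤ (i/(i+1))^φ`, and the product of the `i/(i+1)` telescopes to `a/(b+1) ≤ a/b`. -/

lemma div_add_le_div_add_one_rpow {x φ : ℝ} (hx : 0 < x) (hφ0 : 0 ≤ φ) (hφ1 : φ ≤ 1) :
    x / (x + φ) ≤ (x / (x + 1)) ^ φ := by
  have bernoulli : ((x + 1) / x) ^ φ ≤ (x + φ) / x := by
    have h := rpow_one_add_le_one_add_mul_self
      (by linarith [inv_pos.2 hx] : (-1 : ℝ) ≤ x⁻¹) hφ0 hφ1
    convert h using 1 <;> field_simp
  calc x / (x + φ) = ((x + φ) / x)⁻¹ := (inv_div _ _).symm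
    _ ≤ (((x + 1) / x) ^ φ)⁻¹ := inv_anti₀ (by positivity) bernoulli
    _ = (x / (x + 1)) ^ φ := by rw [← Real.inv_rpow (by positivity), inv_div]

lemma prod_Icc_div_add_one {a b : ℕ} (hab : a ≤ b) :
    ∏ i ∈ Finset.Icc a b, ((i : ℝ) / (i + 1)) = a / (b + 1) := by
  induction b, hab using Nat.le_induction with
  | base => simp
  | succ n hn ih =>
    rw [Finset.prod_Icc_succ_top (hn.trans n.le_succ), ih]
    push_cast
    field_simp

/-- Gamma function property: For integers `b ≥ a ≥ 1` and real
`0 < φ ≤ 1`, `∏_{i=a}^b i/(i+φ) ≤ (a/b)^φ`. -/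
theorem prod_le_rpow (a b : ℕ) (ha : 1 ≤ a) (hab : a ≤ b) (φ : ℝ)
    (hφ0 : 0 < φ) (hφ1 : φ ≤ 1) :
    (∏ i ∈ Finset.Icc a b, ((i:ℝ) / ((i:ℝ) + φ))) ≤ ((a:ℝ) / (b:ℝ)) ^ φ := by
  have hpos : ∀ i ∈ Finset.Icc a b, (0 : ℝ) < i := fun i hi =>
    Nat.cast_pos.2 (ha.trans (Finset.mem_Icc.1 hi).1)
  calc ∏ i ∈ Finset.Icc a b, ((i : ℝ) / (i + φ))
      ≤ ∏ i ∈ Finset.Icc a b, ((i : ℝ) / (i + 1)) ^ φ :=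
        Finset.prod_le_prod (fun i hi => by have := hpos i hi; positivity)
          fun i hi => div_add_le_div_add_one_rpow (hpos i hi) hφ0.le hφ1
    _ = ((a : ℝ) / (b + 1)) ^ φ := by
        rw [Real.finsetProd_rpow _ _ (fun i hi => by have := hpos i hi; positivity),
          prod_Icc_div_add_one hab]
    _ ≤ ((a : ℝ) / b) ^ φ := by
        have hb : (0 : ℝ) < b := hpos b (Finset.right_mem_Icc.2 hab)
        gcongr
        linarith
end

section
/- Let k ≥ 2 and m ≥ 1 be integers and set M = k·m. Let x = k·x' for an integer x' with 1 ≤ x' ≤ m, and let t ∈ ℕ. Define N(x,t) = 1 if t < x'; N(x,t) = ∏_{i=x'}^{t} (1 − 1/(i·k − i + 1)) if x' ≤ t ≤ m; N(x,t) = (∏_{i=x'}^{m} (1 − 1/(i·k − i + 1))) · (∏_{i=m+1}^{t} (1 − 1/(M − i + 1))) if m < t < M; and N(x,t) = 0 if t ≥ M. Then N(x,t) ≤ OPT_k(x/M, t/M) for every such x and every t ∈ ℕ with t < M. -/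
open Finset

theorem prod_Ico_div_mul_eq {G₀ : Type*} [CommGroupWithZero G₀] (f : ℕ → G₀) {a b : ℕ}
    (hab : a ≤ b) (hf : ∀ i ∈ Ico a b, f i ≠ 0) :
    (∏ i ∈ Ico a b, f (i + 1) / f i) * f a = f b := by
  induction b, hab using Nat.le_induction with
  | base => simp
  | succ b hab ih =>
    rw [prod_Ico_succ_top hab, mul_right_comm, ih fun i hi ↦ hf i (Ico_subset_Ico_right b.le_succ hi),
      mul_div_cancel₀ _ (hf b (mem_Ico.2 ⟨hab, b.lt_succ_self⟩))]

theorem prod_Icc_natCast_div_succ {a b : ℕ} (ha : 1 ≤ a) (hab : a ≤ b) :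
    ∏ i ∈ Icc a b, (i / (i + 1) : ℝ) = a / (b + 1) := by
  have h := prod_Ico_div_mul_eq (fun i : ℕ ↦ (i : ℝ)) (a := a) (b := b + 1) (by omega)
    fun i hi ↦ Nat.cast_ne_zero.2 (by simp only [mem_Ico] at hi; omega)
  rw [Ico_add_one_right_eq_Icc] at h
  have hprod : ∏ i ∈ Icc a b, ((i + 1 : ℕ) / i : ℝ) = (b + 1) / a := by
    rw [eq_div_iff (by positivity), h]; push_cast; ring
  rw [← inv_div, ← hprod, ← prod_inv_distrib]
  push_cast
  simp only [inv_div]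

theorem one_sub_inv_le_rpow {k i : ℝ} (hk : 2 ≤ k) (hi : 0 < i) :
    1 - 1 / (i * k - i + 1) ≤ (i / (i + 1)) ^ (1 / (k - 1)) := by
  have hk₁ : 0 < k - 1 := by linarith
  have bernoulli : (1 + 1 / i) ^ (1 / (k - 1)) ≤ 1 + 1 / (k - 1) * (1 / i) :=
    rpow_one_add_le_one_add_mul_self (by linarith [one_div_pos.2 hi]) (by positivity)
      ((div_le_one hk₁).2 (by linarith))
  have hlhs : 1 - 1 / (i * k - i + 1) = (1 + 1 / (k - 1) * (1 / i))⁻¹ := by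
    field_simp
    ring
  have hrhs : (i / (i + 1)) ^ (1 / (k - 1)) = ((1 + 1 / i) ^ (1 / (k - 1)))⁻¹ := by
    rw [← Real.inv_rpow (by positivity)]
    field_simp
  rw [hlhs, hrhs]
  exact inv_anti₀ (by positivity) bernoulli

theorem prod_one_sub_inv_le_rpow {k : ℝ} (hk : 2 ≤ k) {a b : ℕ} (ha : 1 ≤ a) (hab : a ≤ b) :
    ∏ i ∈ Icc a b, (1 - 1 / ((i : ℝ) * k - i + 1)) ≤ (a / (b + 1) : ℝ) ^ (1 / (k - 1)) := by
  have hpos : ∀ i ∈ Icc a b, (0 : ℝ) < i := fun i hi ↦ by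
    simp only [mem_Icc] at hi; exact_mod_cast (by omega : 0 < i)
  calc ∏ i ∈ Icc a b, (1 - 1 / ((i : ℝ) * k - i + 1))
      ≤ ∏ i ∈ Icc a b, ((i : ℝ) / (i + 1)) ^ (1 / (k - 1)) := by
        refine prod_le_prod (fun i hi ↦ ?_) fun i hi ↦ one_sub_inv_le_rpow hk (hpos i hi)
        have hden : (1 : ℝ) ≤ i * k - i + 1 := by nlinarith [hpos i hi]
        rw [sub_nonneg, div_le_one (by linarith)]
        exact hden
    _ = (a / (b + 1) : ℝ) ^ (1 / (k - 1)) := by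
        rw [Real.finsetProd_rpow _ _ fun i hi ↦ (div_pos (hpos i hi) (by linarith [hpos i hi])).le,
          prod_Icc_natCast_div_succ ha hab]

theorem prod_Icc_one_sub_inv_sub {M : ℝ} {m t : ℕ} (hmt : m ≤ t) (htM : (t : ℝ) < M) :
    ∏ i ∈ Icc (m + 1) t, (1 - 1 / (M - i + 1)) = (M - t) / (M - m) := by
  have hne : ∀ i ∈ Ico (m + 1) (t + 1), M - (i : ℕ) + 1 ≠ 0 := fun i hi ↦ by
    simp only [mem_Ico] at hi
    have : (i : ℝ) ≤ t + 1 := by exact_mod_cast hi.2.le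
    linarith
  have h := prod_Ico_div_mul_eq (fun i : ℕ ↦ M - i + 1) (by omega) hne
  rw [Ico_add_one_right_eq_Icc] at h
  have hm : (m : ℝ) < M := lt_of_le_of_lt (by exact_mod_cast hmt) htM
  have hfactor : ∀ i ∈ Icc (m + 1) t, 1 - 1 / (M - i + 1) = (M - (i + 1 : ℕ) + 1) / (M - i + 1) :=
    fun i hi ↦ by
      have : M - (i : ℝ) + 1 ≠ 0 := hne i (by simpa [Nat.lt_succ_iff] using hi)
      field_simp
      push_cast
      ring
  rw [prod_congr rfl hfactor, eq_div_iff (by linarith),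
    show M - m = M - (m + 1 : ℕ) + 1 by push_cast; ring, h]
  push_cast
  ring

section OPTk

variable {k : ℕ} {m x t M : ℝ}

theorem OPTk_eq_one (hk : 1 ≤ k) (hM : M = k * m) (hm : 0 < m) (hxm : x ≤ m) (htx : t < x) :
    OPTk k (k * x / M) (t / M) = 1 := by
  have hk₀ : (1 : ℝ) ≤ k := by exact_mod_cast hk
  have hM₀ : 0 < M := by rw [hM]; positivity
  have htm : t < m := htx.trans_le hxm
  rw [OPTk, if_neg, if_neg, if_neg]
  · rw [not_le, mul_div_assoc, mul_div_cancel_left₀ _ (by positivity)]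
    exact div_lt_div_of_pos_right htx hM₀
  · rw [not_le, div_lt_div_iff₀ hM₀ (by positivity), hM]
    nlinarith
  · rw [not_le, div_lt_one hM₀, hM]
    nlinarith

theorem OPTk_eq_rpow (hk : 1 ≤ k) (hM : M = k * m) (hx : 0 < x) (hxt : x ≤ t) (htm : t < m) :
    OPTk k (k * x / M) (t / M) = (x / t) ^ (1 / (k - 1 : ℝ)) := by
  have hk₀ : (1 : ℝ) ≤ k := by exact_mod_cast hk
  have hM₀ : 0 < M := by rw [hM]; nlinarith
  rw [OPTk, if_neg, if_neg, if_pos]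
  · congr 1
    field_simp
  · rw [mul_div_assoc, mul_div_cancel_left₀ _ (by positivity)]
    exact div_le_div_of_nonneg_right hxt hM₀.le
  · rw [not_le, div_lt_div_iff₀ hM₀ (by positivity), hM]
    nlinarith
  · rw [not_le, div_lt_one hM₀, hM]
    nlinarith

theorem OPTk_eq_mul_rpow (hk : 2 ≤ k) (hM : M = k * m) (hm : 0 < m) (hmt : m ≤ t) (htM : t < M) :
    OPTk k (k * x / M) (t / M) = (M - t) / (M - m) * (x / m) ^ (1 / (k - 1 : ℝ)) := by
  have hk₀ : (2 : ℝ) ≤ k := by exact_mod_cast hk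
  have hM₀ : 0 < M := by rw [hM]; positivity
  rw [OPTk, if_neg, if_pos]
  · have : (k : ℝ) - 1 ≠ 0 := by linarith
    have : M - m ≠ 0 := by rw [hM]; nlinarith
    rw [hM]
    field_simp
  · rw [div_le_div_iff₀ (by positivity) hM₀, hM]
    nlinarith
  · rw [not_le, div_lt_one hM₀]
    exact htM

end OPTk

theorem alg_matrix_le_OPT_general (k m : ℕ) (hk : 2 ≤ k) (M : ℕ) (hM : M = k * m)
    (x' : ℕ) (hx'1 : 1 ≤ x') (hx'2 : x' ≤ m) (t : ℕ) (ht : t < M) :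
    (if t < x' then (1:ℝ)
     else if t ≤ m then
       ∏ i ∈ Finset.Icc x' t, (1 - 1 / ((i:ℝ) * (k:ℝ) - (i:ℝ) + 1))
     else
       (∏ i ∈ Finset.Icc x' m, (1 - 1 / ((i:ℝ) * (k:ℝ) - (i:ℝ) + 1))) *
         ∏ i ∈ Finset.Icc (m + 1) t, (1 - 1 / ((M:ℝ) - (i:ℝ) + 1)))
      ≤ OPTk k (((k:ℝ) * (x':ℝ)) / (M:ℝ)) ((t:ℝ) / (M:ℝ)) := by
  have hkR : (2 : ℝ) ≤ k := by exact_mod_cast hk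
  have hMR : (M : ℝ) = k * m := by exact_mod_cast hM
  have hx'R : (1 : ℝ) ≤ x' := by exact_mod_cast hx'1
  have hx'mR : (x' : ℝ) ≤ m := by exact_mod_cast hx'2
  have htMR : (t : ℝ) < M := by exact_mod_cast ht
  have hprod_le : ∀ b : ℕ, x' ≤ b → ∏ i ∈ Icc x' b, (1 - 1 / ((i : ℝ) * k - i + 1)) ≤
      ((x' : ℝ) / b) ^ (1 / (k - 1 : ℝ)) := fun b hb ↦ by
    have hbR : (x' : ℝ) ≤ b := by exact_mod_cast hb
    refine (prod_one_sub_inv_le_rpow hkR hx'1 hb).trans (Real.rpow_le_rpow (by positivity) ?_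
      (by rw [one_div_nonneg]; linarith))
    exact div_le_div_of_nonneg_left (by positivity) (by linarith) (by linarith)
  rcases lt_or_ge t x' with htx | hxt
  · rw [if_pos htx, OPTk_eq_one (by omega) hMR (by linarith) hx'mR (by exact_mod_cast htx)]
  rw [if_neg hxt.not_gt]
  rcases lt_or_ge t m with htm | hmt
  · rw [if_pos htm.le, OPTk_eq_rpow (by omega) hMR (by linarith) (by exact_mod_cast hxt)
      (by exact_mod_cast htm)]
    exact hprod_le t hxt
  · have hmtR : (m : ℝ) ≤ t := by exact_mod_cast hmt
    rw [OPTk_eq_mul_rpow hk hMR (by linarith) hmtR htMR]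
    split_ifs with htm
    · obtain rfl : t = m := le_antisymm htm hmt
      rw [div_self (by linarith), one_mul]
      exact hprod_le t hxt
    · rw [prod_Icc_one_sub_inv_sub hmt htMR, mul_comm]
      refine mul_le_mul_of_nonneg_left (hprod_le m hx'2) (div_nonneg ?_ ?_) <;> linarith

/-- Let `k ≥ 2`, `m ≥ 1`, `M = k·m`, `x = k·x'` with `1 ≤ x' ≤ m`, and
`t ∈ ℕ` with `t < M`. The probability `N(x,t)` that box `x` is unchecked at time `t`
by a searcher running Algorithm 2 (given by the displayed product formulas) satisfies
`N(x,t) ≤ OPT_k(x/M, t/M)`. -/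
theorem alg_matrix_le_OPT (k m : ℕ) (hk : 2 ≤ k) (hm : 1 ≤ m) (M : ℕ) (hM : M = k * m)
    (x' : ℕ) (hx'1 : 1 ≤ x') (hx'2 : x' ≤ m) (t : ℕ) (ht : t < M) :
    (if t < x' then (1:ℝ)
     else if t ≤ m then
       ∏ i ∈ Finset.Icc x' t, (1 - 1 / ((i:ℝ) * (k:ℝ) - (i:ℝ) + 1))
     else
       (∏ i ∈ Finset.Icc x' m, (1 - 1 / ((i:ℝ) * (k:ℝ) - (i:ℝ) + 1))) *
         ∏ i ∈ Finset.Icc (m + 1) t, (1 - 1 / ((M:ℝ) - (i:ℝ) + 1)))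
      ≤ OPTk k (((k:ℝ) * (x':ℝ)) / (M:ℝ)) ((t:ℝ) / (M:ℝ)) :=
  alg_matrix_le_OPT_general k m hk M hM x' hx'1 hx'2 t ht
end
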